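/- arXiv:2603.06094 — 8 statements merged into one kernel-verified Lean document; each statement's English description precedes it below -/
import Mathlib

section
/- Let q, r, k be positive integers, set B = q(r-1)+k, g = gcd(q·r, k), ρ = q·r/g and κ = k/g, and let a : ℕ → ℚ and Y ∈ ℚ⟦X⟧ be as in the context. Then the identity X^{(q-1)·κ} = Y^κ · (1 - (k/r)·Y^{r-1}·X^{r-1+k})^{ρ+κ} holds in the formal power series ring ℚ⟦X⟧. -/
/-!
With `r = s + 1`, `B = q s + k` and `N = q r + k = B + q`, put `c b = a b / b!`,
`V = ∑ c b t^b` and `G = ∑ (B b + q) c b t^b`, so that `Y = X^(q-1) G(X^B)`.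
In terms of the Euler operator `θ = t d/dt`, the definition of `G` reads `G = (Bθ + q) V`
and the cut-and-join recursion reads `r V' = G^r`. Eliminating `V` gives the first-order ODE
`r G' (1 - B t G^s) = N G^r`, and along it the logarithmic derivative of
`G^m (1 - (k/r) t G^s)^n` vanishes whenever `m : n = k : N`; as the constant term is `1`,
this product is `1`. Taking `m = κ`, `n = ρ + κ` and substituting `t = X^B` gives the curve.
-/

open PowerSeries Finset Nat

namespace PowerSeries

variable {R : Type*}

theorem coeff_X_mul_derivative [CommSemiring R] (f : R⟦X⟧) (n : ℕ) :
    coeff n (X * d⁄dX R f) = n * coeff n f := by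
  cases n with
  | zero => simp
  | succ n => rw [coeff_succ_X_mul, coeff_derivative, mul_comm]; push_cast; rfl

theorem mul_derivative_pow [CommSemiring R] (f : R⟦X⟧) (n : ℕ) :
    f * d⁄dX R (f ^ n) = n * f ^ n * d⁄dX R f := by
  rw [derivative_pow]
  cases n with
  | zero => simp
  | succ n => rw [Nat.add_sub_cancel, pow_succ]; ring

theorem coeff_pow_eq_sum_antidiagonalTuple [CommSemiring R] (p : R⟦X⟧) (r n : ℕ) :
    coeff n (p ^ r) = ∑ t ∈ Finset.Nat.antidiagonalTuple r n, ∏ j, coeff (t j) p := by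
  rw [← Fin.prod_const, coeff_prod, finsuppAntidiag, sum_map,
    ← piAntidiag_univ_fin_eq_antidiagonalTuple]
  exact sum_attach _ fun t : Fin r → ℕ => ∏ j, coeff (t j) p

theorem mk_natCast_mul_add_eq [CommSemiring R] (B q : ℕ) (c : ℕ → R) :
    mk (fun b => ((B * b + q : ℕ) : R) * c b) = (B : R⟦X⟧) * X * d⁄dX R (mk c) + (q : R⟦X⟧) * mk c := by
  ext b
  rw [map_add, mul_assoc, ← map_natCast (C (R := R)), ← map_natCast (C (R := R)), coeff_C_mul,
    coeff_C_mul, coeff_X_mul_derivative, coeff_mk, coeff_mk]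
  push_cast
  ring

theorem eq_X_pow_mul_expand_mk [CommRing R] {Y : R⟦X⟧} {B d : ℕ} (hB : B ≠ 0) (e : ℕ → R)
    (hY : ∀ b, coeff (B * b + d) Y = e b) (hY₀ : ∀ n, (∀ b, n ≠ B * b + d) → coeff n Y = 0) :
    Y = X ^ d * expand B hB (mk e) := by
  ext n
  rw [coeff_X_pow_mul', coeff_expand]
  by_cases hn : ∃ b, n = B * b + d
  · obtain ⟨b, rfl⟩ := hn
    rw [hY, if_pos (by omega), Nat.add_sub_cancel, if_pos (dvd_mul_right B b),
      Nat.mul_div_cancel_left b (Nat.pos_of_ne_zero hB), coeff_mk]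
  · push Not at hn
    rw [hY₀ n hn]
    split_ifs with _ hBd <;> try rfl
    obtain ⟨b, hb⟩ := hBd
    exact absurd (by omega) (hn b)

end PowerSeries

theorem Nat.div_gcd_mul_add_eq (x y : ℕ) :
    y / x.gcd y * (x + y) = (x / x.gcd y + y / x.gcd y) * y := by
  rw [mul_add, add_mul, Nat.div_mul_right_comm (Nat.gcd_dvd_right x y),
    Nat.div_mul_right_comm (Nat.gcd_dvd_left x y), mul_comm y x]

theorem ode_of_eq_euler_of_derivative_eq_pow {R : Type*} [CommRing R] (q s k : ℕ) {G V : R⟦X⟧}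
    (hG : G = ((q * s + k : ℕ) : R⟦X⟧) * X * d⁄dX R V + (q : R⟦X⟧) * V)
    (hV : ((s + 1 : ℕ) : R⟦X⟧) * d⁄dX R V = G ^ (s + 1)) :
    ((s + 1 : ℕ) : R⟦X⟧) * d⁄dX R G * (1 - ((q * s + k : ℕ) : R⟦X⟧) * X * G ^ s) =
      ((q * (s + 1) + k : ℕ) : R⟦X⟧) * G ^ (s + 1) := by
  have hG' := congrArg (d⁄dX R) hG
  have hV' := congrArg (d⁄dX R) hV
  simp only [Derivation.leibniz, Derivation.map_natCast, map_add, derivative_X, smul_eq_mul,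
    derivative_pow] at hG' hV'
  push_cast at hV hV' hG' ⊢
  linear_combination (s + 1 : R⟦X⟧) * hG' + (q * s + k) * X * hV' + (q * s + k + q) * hV

theorem pow_mul_pow_eq_one_of_ode {K : Type*} [Field K] [CharZero K] (q s k : ℕ) {G : K⟦X⟧}
    (hk : k ≠ 0) {m n : ℕ} (hmn : m * (q * (s + 1) + k) = n * k)
    (hode : ((s + 1 : ℕ) : K⟦X⟧) * d⁄dX K G * (1 - ((q * s + k : ℕ) : K⟦X⟧) * X * G ^ s) =
      ((q * (s + 1) + k : ℕ) : K⟦X⟧) * G ^ (s + 1))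
    (hG₀ : constantCoeff G = 1) :
    G ^ m * (1 - C ((k : K) / (s + 1)) * X * G ^ s) ^ n = 1 := by
  obtain ⟨S, hS⟩ : ∃ S, S = 1 - C ((k : K) / (s + 1)) * X * G ^ s := ⟨_, rfl⟩
  rw [← hS]
  have hS₀ : constantCoeff S = 1 := by simp [hS]
  have hc : ((s + 1 : ℕ) : K⟦X⟧) * C ((k : K) / (s + 1)) = k := by
    rw [← map_natCast C, ← map_mul, ← map_natCast C]
    congr 1
    push_cast
    field_simp
  have hlog : G * S * d⁄dX K (G ^ m * S ^ n) =
      G ^ m * S ^ n * (m * S * d⁄dX K G + n * G * d⁄dX K S) := by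
    rw [Derivation.leibniz, smul_eq_mul, smul_eq_mul]
    linear_combination G ^ m * G * mul_derivative_pow S n + S ^ n * S * mul_derivative_pow G m
  have hdS : d⁄dX K S = -(C ((k : K) / (s + 1)) * (G ^ s + X * d⁄dX K (G ^ s))) := by
    simp only [hS, map_sub, Derivation.leibniz, derivative_C, derivative_X, smul_eq_mul,
      Derivation.map_one_eq_zero]
    ring
  -- `(s + 1) B = k + N s` turns the bracket into a multiple of the ODE.
  have hbracket : (k * ((s + 1 : ℕ) : K⟦X⟧)) * (m * S * d⁄dX K G + n * G * d⁄dX K S) = 0 := by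
    have hmn' := congrArg (Nat.cast (R := K⟦X⟧)) hmn
    rw [hdS, hS]
    push_cast at hode hc hmn' ⊢
    linear_combination (k * m) * hode
      - (k * m * X * G ^ s * d⁄dX K G + k * n * G ^ (s + 1) + k * n * X * G * d⁄dX K (G ^ s)) * hc
      - (k ^ 2 * n * X) * mul_derivative_pow G s
      + (k * (G ^ (s + 1) + s * X * G ^ s * d⁄dX K G)) * hmn'
  have hne : ∀ f : K⟦X⟧, constantCoeff f = 1 → f ≠ 0 := fun f hf h => by simp [h] at hf
  have hkr : (k * ((s + 1 : ℕ) : K⟦X⟧)) ≠ 0 := by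
    rw [← Nat.cast_mul, ← map_natCast C, Ne, ← map_zero C, C_injective.eq_iff]
    exact Nat.cast_ne_zero.mpr (Nat.mul_ne_zero hk s.succ_ne_zero)
  have hD : d⁄dX K (G ^ m * S ^ n) = 0 := by
    rw [(mul_eq_zero.mp hbracket).resolve_left hkr, mul_zero] at hlog
    exact (mul_eq_zero.mp hlog).resolve_left (mul_ne_zero (hne G hG₀) (hne S hS₀))
  exact derivative.ext (by rw [hD, derivative_one]) (by simp [hG₀, hS₀])

theorem natCast_mul_derivative_eq_pow_of_cut_join {B q r : ℕ} (hr : r ≠ 0) {a : ℕ → ℚ}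
    (harec : ∀ b : ℕ, 1 ≤ b → a b = (1 / r : ℚ) *
      ∑ t ∈ Finset.Nat.antidiagonalTuple r (b - 1),
        (((b - 1)! : ℚ) / ∏ j, ((t j)! : ℚ)) *
          ∏ j, (((B * t j + q : ℕ) : ℚ) * a (t j))) :
    (r : ℚ⟦X⟧) * d⁄dX ℚ (mk fun b => a b / b !) =
      (mk fun b => ((B * b + q : ℕ) : ℚ) * (a b / b !)) ^ r := by
  ext b
  rw [← map_natCast (C (R := ℚ)), coeff_C_mul, coeff_derivative, coeff_mk,
    coeff_pow_eq_sum_antidiagonalTuple, harec (b + 1) b.succ_pos, Nat.add_sub_cancel,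
    Nat.factorial_succ]
  simp only [coeff_mk, mul_sum, sum_div, sum_mul]
  refine sum_congr rfl fun t _ => ?_
  simp only [mul_div_assoc', prod_div_distrib, prod_mul_distrib]
  have : (r : ℚ) ≠ 0 := by exact_mod_cast hr
  have : ∏ j, ((t j)! : ℚ) ≠ 0 := prod_ne_zero_iff.mpr fun j _ => by positivity
  push_cast
  field_simp

/-- Let `q, r, k` be positive integers, `B = q(r-1)+k`,
`g = gcd(q·r, k)`, `ρ = q·r/g`, `κ = k/g`.  Let `a : ℕ → ℚ` be the sequence of
genus-0 one-part `(k,r,q)`-leaky completed-cycles Hurwitz numbers, determined by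
`a 0 = 1/q` and the tropical cut-and-join recursion, and let
`Y = Σ_{b≥0} ((B·b+q)·a(b)/b!) · X^{B·b+q-1} ∈ ℚ⟦X⟧`.  Then
`X^{(q-1)·κ} = Y^κ · (1 - (k/r)·Y^{r-1}·X^{r-1+k})^{ρ+κ}` in `ℚ⟦X⟧`. -/
theorem leaky_one_part_spectral_curve
    (q r k : ℕ) (hq : 0 < q) (hr : 0 < r) (hk : 0 < k)
    (B : ℕ) (hB : B = q * (r - 1) + k)
    (g ρ κ : ℕ) (hg : g = Nat.gcd (q * r) k) (hρ : ρ = q * r / g) (hκ : κ = k / g)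
    (a : ℕ → ℚ)
    (ha0 : a 0 = 1 / q)
    (harec : ∀ b : ℕ, 1 ≤ b → a b = (1 / r : ℚ) *
      ∑ t ∈ Finset.Nat.antidiagonalTuple r (b - 1),
        (((b - 1)! : ℚ) / ∏ j, ((t j)! : ℚ)) *
          ∏ j, (((B * t j + q : ℕ) : ℚ) * a (t j)))
    (Y : PowerSeries ℚ)
    (hYcoeff : ∀ b : ℕ,
      PowerSeries.coeff (B * b + q - 1) Y = ((B * b + q : ℕ) : ℚ) * a b / (b)!)
    (hYzero : ∀ n : ℕ, (∀ b : ℕ, n ≠ B * b + q - 1) → PowerSeries.coeff n Y = 0) :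
    (PowerSeries.X : PowerSeries ℚ) ^ ((q - 1) * κ) =
      Y ^ κ *
        (1 - PowerSeries.C ((k : ℚ) / r) * Y ^ (r - 1) *
            PowerSeries.X ^ (r - 1 + k)) ^ (ρ + κ) := by
  obtain ⟨s, rfl⟩ : ∃ s, r = s + 1 := ⟨r - 1, by omega⟩
  rw [Nat.add_sub_cancel] at hB ⊢
  subst hB hg hρ hκ
  have hG₀ : constantCoeff (mk fun b => (((q * s + k) * b + q : ℕ) : ℚ) * (a b / b !)) = 1 := by
    simp [← coeff_zero_eq_constantCoeff_apply, ha0, hq.ne']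
  have hcurve := pow_mul_pow_eq_one_of_ode q s k hk.ne' (Nat.div_gcd_mul_add_eq _ _)
    (ode_of_eq_euler_of_derivative_eq_pow q s k (mk_natCast_mul_add_eq (R := ℚ) _ _ _)
      (natCast_mul_derivative_eq_pow_of_cut_join s.succ_ne_zero harec)) hG₀
  have hB₀ : q * s + k ≠ 0 := by omega
  have hY := eq_X_pow_mul_expand_mk hB₀ _ (d := q - 1)
    (fun b => by rw [← Nat.add_sub_assoc hq, hYcoeff b, mul_div_assoc])
    (fun n hn => hYzero n fun b => by rw [Nat.add_sub_assoc hq]; exact hn b)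
  set W := expand (q * s + k) hB₀ (mk fun b => (((q * s + k) * b + q : ℕ) : ℚ) * (a b / b !))
  have hXW : C ((k : ℚ) / (s + 1 : ℕ)) * (X ^ (q - 1) * W) ^ s * X ^ (s + k) =
      C ((k : ℚ) / (s + 1)) * X ^ (q * s + k) * W ^ s := by
    obtain ⟨q, rfl⟩ : ∃ q', q = q' + 1 := ⟨q - 1, by omega⟩
    push_cast
    ring
  have hWcurve := congrArg (expand (q * s + k) hB₀) hcurve
  simp only [map_mul, map_pow, map_sub, map_one, expand_C, expand_X] at hWcurve
  rw [hY, hXW, mul_pow, ← pow_mul, mul_assoc, hWcurve, mul_one]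
end

section
/- Let q, r, k be positive integers, and set g = gcd(q·r, k), ρ = q·r/g, κ = k/g. There exists exactly one power series Y ∈ ℚ⟦X⟧ whose coefficients vanish in all degrees strictly below q-1, whose coefficient in degree q-1 equals 1, and which satisfies X^{(q-1)·κ} = Y^κ · (1 - (k/r)·Y^{r-1}·X^{r-1+k})^{ρ+κ} in ℚ⟦X⟧. -/
/-!
Writing `Y = X ^ (q - 1) * Z` and cancelling `X ^ ((q - 1) * κ)`, the conditions on `Y` become
`Z(0) = 1` and `Z ^ κ * (1 - (k / r) X ^ m Z ^ (r - 1)) ^ (ρ + κ) = 1` with `m ≥ k ≥ 1`. This is a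
polynomial equation in `Z` over `ℚ⟦X⟧` which holds modulo `X` at `Z = 1`, and whose derivative at
`Z = 1` has constant coefficient `κ ≠ 0`. Hensel's lemma in the `X`-adically complete ring `ℚ⟦X⟧`
(for non-monic polynomials, proved here by Newton's iteration) then gives exactly one root
congruent to `1` modulo `X`.
-/

open PowerSeries

namespace PowerSeries

variable {R : Type*} [CommRing R]

theorem eq_zero_of_forall_X_pow_dvd {φ : R⟦X⟧} (h : ∀ n, (X : R⟦X⟧) ^ n ∣ φ) : φ = 0 := by
  ext n
  simpa using X_pow_dvd_iff.mp (h (n + 1)) n n.lt_succ_self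

theorem isUnit_of_X_dvd_sub {φ ψ : R⟦X⟧} (h : X ∣ φ - ψ) (hψ : IsUnit ψ) : IsUnit φ := by
  rw [X_dvd_iff, map_sub, sub_eq_zero] at h
  rw [isUnit_iff_constantCoeff, h]
  exact isUnit_iff_constantCoeff.mp hψ

theorem X_pow_dvd_sub_of_le {c : ℕ → R⟦X⟧} (hc : ∀ n, (X : R⟦X⟧) ^ (n + 1) ∣ c (n + 1) - c n)
    {m n : ℕ} (hmn : m ≤ n) : (X : R⟦X⟧) ^ (m + 1) ∣ c n - c m := by
  induction n, hmn using Nat.le_induction with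
  | base => simp
  | succ n hmn ih =>
    rw [← sub_add_sub_cancel]
    exact dvd_add ((pow_dvd_pow X (by omega)).trans (hc n)) ih

theorem exists_forall_X_pow_dvd_sub {c : ℕ → R⟦X⟧}
    (hc : ∀ n, (X : R⟦X⟧) ^ (n + 1) ∣ c (n + 1) - c n) :
    ∃ a, ∀ n, (X : R⟦X⟧) ^ (n + 1) ∣ a - c n := by
  refine ⟨mk fun i ↦ coeff i (c i), fun n ↦ X_pow_dvd_iff.mpr fun i hi ↦ ?_⟩
  have := X_pow_dvd_iff.mp (X_pow_dvd_sub_of_le hc (Nat.lt_succ_iff.mp hi)) i i.lt_succ_self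
  rw [map_sub, sub_eq_zero] at this
  rw [map_sub, coeff_mk, this, sub_self]

theorem constantCoeff_eval (p : Polynomial R⟦X⟧) (a : R⟦X⟧) :
    constantCoeff (p.eval a) = (p.map constantCoeff).eval (constantCoeff a) := by
  rw [Polynomial.eval_map, Polynomial.eval₂_hom]

theorem X_dvd_eval_sub_eval (p : Polynomial R⟦X⟧) {a b : R⟦X⟧} (h : X ∣ a - b) :
    X ∣ p.eval a - p.eval b :=
  h.trans (Polynomial.sub_dvd_eval_sub a b p)

/-- Newton's iteration with the derivative frozen at `a₀`: `u` stands for `f'(a₀)⁻¹`. -/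
noncomputable def newtonSeq (f : Polynomial R⟦X⟧) (a₀ u : R⟦X⟧) : ℕ → R⟦X⟧
  | 0 => a₀
  | n + 1 => newtonSeq f a₀ u n - u * f.eval (newtonSeq f a₀ u n)

theorem newtonSeq_spec {f : Polynomial R⟦X⟧} {a₀ u : R⟦X⟧}
    (hu : f.derivative.eval a₀ * u = 1) (h₁ : X ∣ f.eval a₀) (n : ℕ) :
    X ∣ newtonSeq f a₀ u n - a₀ ∧ X ^ (n + 1) ∣ f.eval (newtonSeq f a₀ u n) := by
  induction n with
  | zero => simpa [newtonSeq] using h₁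
  | succ n ih =>
    obtain ⟨hb, he⟩ := ih
    set b := newtonSeq f a₀ u n
    set e := f.eval b
    obtain ⟨k, hk⟩ := Polynomial.binomExpansion f b (-(u * e))
    have hX : X ∣ (f.derivative.eval a₀ - f.derivative.eval b) * u + k * u ^ 2 * e :=
      dvd_add ((X_dvd_eval_sub_eval _ (dvd_sub_comm.mp hb)).mul_right _)
        (((dvd_pow_self X n.succ_ne_zero).trans he).mul_left _)
    have heval : f.eval (newtonSeq f a₀ u (n + 1))
        = e * ((f.derivative.eval a₀ - f.derivative.eval b) * u + k * u ^ 2 * e) := by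
      rw [newtonSeq, sub_eq_add_neg, hk]
      linear_combination (-e) * hu
    constructor
    · rw [newtonSeq, sub_right_comm]
      exact dvd_sub hb (((dvd_pow_self X n.succ_ne_zero).trans he).mul_left _)
    · rw [heval, pow_succ]
      exact mul_dvd_mul he hX

theorem exists_eval_eq_zero {f : Polynomial R⟦X⟧} {a₀ : R⟦X⟧} (h₁ : X ∣ f.eval a₀)
    (h₂ : IsUnit (f.derivative.eval a₀)) : ∃ a, X ∣ a - a₀ ∧ f.eval a = 0 := by
  obtain ⟨u, hu⟩ := h₂.exists_right_inv
  have hstep (n : ℕ) : X ^ (n + 1) ∣ newtonSeq f a₀ u (n + 1) - newtonSeq f a₀ u n := by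
    rw [newtonSeq, sub_sub_cancel_left, dvd_neg]
    exact (newtonSeq_spec hu h₁ n).2.mul_left u
  obtain ⟨a, ha⟩ := exists_forall_X_pow_dvd_sub hstep
  refine ⟨a, by simpa [newtonSeq] using ha 0, eq_zero_of_forall_X_pow_dvd fun n ↦ ?_⟩
  have hdiff := (ha n).trans (Polynomial.sub_dvd_eval_sub a _ f)
  exact (pow_dvd_pow X n.le_succ).trans
    (by simpa using dvd_add hdiff (newtonSeq_spec hu h₁ n).2)

theorem eq_of_eval_eq_zero {f : Polynomial R⟦X⟧} {a b : R⟦X⟧} (hab : X ∣ b - a)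
    (h : IsUnit (f.derivative.eval a)) (ha : f.eval a = 0) (hb : f.eval b = 0) : b = a := by
  obtain ⟨k, hk⟩ := Polynomial.binomExpansion f a (b - a)
  rw [add_sub_cancel, ha, hb, zero_add] at hk
  have hunit : IsUnit (f.derivative.eval a + k * (b - a)) :=
    isUnit_of_X_dvd_sub (by simpa using hab.mul_left k) h
  have hzero : (f.derivative.eval a + k * (b - a)) * (b - a) = 0 := by
    linear_combination -hk
  exact sub_eq_zero.mp (hunit.mul_right_eq_zero.mp hzero)

theorem existsUnique_eval_eq_zero {f : Polynomial R⟦X⟧} {a₀ : R⟦X⟧} (h₁ : X ∣ f.eval a₀)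
    (h₂ : IsUnit (f.derivative.eval a₀)) : ∃! a, X ∣ a - a₀ ∧ f.eval a = 0 := by
  obtain ⟨a, ha₀, ha⟩ := exists_eval_eq_zero h₁ h₂
  refine ⟨a, ⟨ha₀, ha⟩, fun b ⟨hb₀, hb⟩ ↦ eq_of_eval_eq_zero ?_ ?_ ha hb⟩
  · simpa using dvd_sub hb₀ ha₀
  · exact isUnit_of_X_dvd_sub (X_dvd_eval_sub_eval _ ha₀) h₂

theorem existsUnique_pow_mul_one_sub_pow_eq_one (c : R) {m : ℕ} (hm : m ≠ 0) (s T : ℕ)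
    {κ : ℕ} (hκ : IsUnit (κ : R)) :
    ∃! Z : R⟦X⟧, X ∣ Z - 1 ∧ Z ^ κ * (1 - C c * X ^ m * Z ^ s) ^ T = 1 := by
  set f : Polynomial R⟦X⟧ :=
    Polynomial.X ^ κ * (1 - Polynomial.C (C c * X ^ m) * Polynomial.X ^ s) ^ T - 1
  have hf : f.map constantCoeff = Polynomial.X ^ κ - 1 := by simp [f, hm]
  have heval (Z : R⟦X⟧) : f.eval Z = Z ^ κ * (1 - C c * X ^ m * Z ^ s) ^ T - 1 := by simp [f]
  have h₁ : X ∣ f.eval 1 := X_dvd_iff.mpr (by simp [constantCoeff_eval, hf])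
  have h₂ : IsUnit (f.derivative.eval 1) := by
    rw [isUnit_iff_constantCoeff, constantCoeff_eval, ← Polynomial.derivative_map, hf]
    simpa [Polynomial.derivative_X_pow] using hκ
  simpa only [heval, sub_eq_zero] using existsUnique_eval_eq_zero h₁ h₂

theorem coeff_lt_eq_zero_and_coeff_eq_one_iff {N : ℕ} {Y : R⟦X⟧} :
    ((∀ n < N, coeff n Y = 0) ∧ coeff N Y = 1) ↔ ∃ Z, X ∣ Z - 1 ∧ Y = X ^ N * Z := by
  constructor
  · rintro ⟨h₀, h₁⟩
    obtain ⟨Z, rfl⟩ := X_pow_dvd_iff.mpr h₀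
    refine ⟨Z, X_dvd_iff.mpr ?_, rfl⟩
    have hcoeff := coeff_X_pow_mul Z N 0
    rw [zero_add] at hcoeff
    rw [map_sub, map_one, ← coeff_zero_eq_constantCoeff_apply, ← hcoeff, h₁, sub_self]
  · rintro ⟨Z, hZ, rfl⟩
    rw [X_dvd_iff, map_sub, sub_eq_zero] at hZ
    refine ⟨fun n hn ↦ ?_, ?_⟩
    · rw [coeff_X_pow_mul', if_neg (by omega)]
    · simpa [hZ] using coeff_X_pow_mul Z N 0

end PowerSeries

theorem leaky_spectral_curve_existence_uniqueness_general
    (q r k : ℕ) (hk : 0 < k)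
    (g ρ κ : ℕ) (hg : g = Nat.gcd (q * r) k) (hκ : κ = k / g) :
    ∃! Y : PowerSeries ℚ,
      (∀ n : ℕ, n < q - 1 → PowerSeries.coeff n Y = 0) ∧
      PowerSeries.coeff (q - 1) Y = 1 ∧
      (PowerSeries.X : PowerSeries ℚ) ^ ((q - 1) * κ) =
        Y ^ κ *
          (1 - PowerSeries.C ((k : ℚ) / r) * Y ^ (r - 1) *
              PowerSeries.X ^ (r - 1 + k)) ^ (ρ + κ) := by
  have hκ₀ : κ ≠ 0 := by
    rw [hκ, hg]
    exact (Nat.div_pos (Nat.le_of_dvd hk (Nat.gcd_dvd_right _ _))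
      (Nat.gcd_pos_of_pos_right _ hk)).ne'
  set m := (q - 1) * (r - 1) + (r - 1 + k)
  have hequation (Z : ℚ⟦X⟧) :
      X ^ ((q - 1) * κ) = (X ^ (q - 1) * Z) ^ κ *
          (1 - C ((k : ℚ) / r) * (X ^ (q - 1) * Z) ^ (r - 1) * X ^ (r - 1 + k)) ^ (ρ + κ) ↔
        Z ^ κ * (1 - C ((k : ℚ) / r) * X ^ m * Z ^ (r - 1)) ^ (ρ + κ) = 1 := by
    have hfactor : (X ^ (q - 1) * Z) ^ κ *
          (1 - C ((k : ℚ) / r) * (X ^ (q - 1) * Z) ^ (r - 1) * X ^ (r - 1 + k)) ^ (ρ + κ) =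
        X ^ ((q - 1) * κ) * (Z ^ κ * (1 - C ((k : ℚ) / r) * X ^ m * Z ^ (r - 1)) ^ (ρ + κ)) := by
      ring
    rw [hfactor, eq_comm, mul_eq_left₀ (pow_ne_zero _ X_ne_zero)]
  obtain ⟨Z, hZ, hZ_unique⟩ := existsUnique_pow_mul_one_sub_pow_eq_one ((k : ℚ) / r)
    (m := m) (by omega) (r - 1) (ρ + κ) (κ := κ) (by simpa using hκ₀)
  refine ⟨X ^ (q - 1) * Z, ?_, fun Y ⟨h₀, h₁, hY⟩ ↦ ?_⟩
  · obtain ⟨h₀, h₁⟩ := coeff_lt_eq_zero_and_coeff_eq_one_iff.mpr ⟨Z, hZ.1, rfl⟩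
    exact ⟨h₀, h₁, (hequation Z).mpr hZ.2⟩
  · obtain ⟨W, hW, rfl⟩ := coeff_lt_eq_zero_and_coeff_eq_one_iff.mp ⟨h₀, h₁⟩
    rw [hZ_unique W ⟨hW, (hequation W).mp hY⟩]

/-- Let `q, r, k` be positive integers, and set
`g = gcd(q·r, k)`, `ρ = q·r/g`, `κ = k/g`.  There exists exactly one power
series `Y ∈ ℚ⟦X⟧` whose coefficients vanish in all degrees strictly below
`q-1`, whose coefficient in degree `q-1` equals `1`, and which satisfies
`X^{(q-1)·κ} = Y^κ · (1 - (k/r)·Y^{r-1}·X^{r-1+k})^{ρ+κ}` in `ℚ⟦X⟧`. -/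
theorem leaky_spectral_curve_existence_uniqueness
    (q r k : ℕ) (hq : 0 < q) (hr : 0 < r) (hk : 0 < k)
    (g ρ κ : ℕ) (hg : g = Nat.gcd (q * r) k) (hρ : ρ = q * r / g) (hκ : κ = k / g) :
    ∃! Y : PowerSeries ℚ,
      (∀ n : ℕ, n < q - 1 → PowerSeries.coeff n Y = 0) ∧
      PowerSeries.coeff (q - 1) Y = 1 ∧
      (PowerSeries.X : PowerSeries ℚ) ^ ((q - 1) * κ) =
        Y ^ κ *
          (1 - PowerSeries.C ((k : ℚ) / r) * Y ^ (r - 1) *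
              PowerSeries.X ^ (r - 1 + k)) ^ (ρ + κ) :=
  leaky_spectral_curve_existence_uniqueness_general q r k hk g ρ κ hg hκ
end

section
/- Let q, r, k be positive integers, B = q(r-1)+k, A = k/r ∈ ℚ, and let a : ℕ → ℚ be as in the context. Then for every b ∈ ℕ, setting m = B·b + q, one has a(b) = (b! / (m·(b·(r-1)+1))) · binom(m/A, b) · A^b, where m/A = m·r/k ∈ ℚ. Equivalently, the genus-0 one-part (k,r,q)-leaky completed-cycles Hurwitz number lh^{k,r,q}_{0;(m)} equals b!/(m·(b(r-1)+1)) · binom(m·r/k, b) · (k/r)^b whenever b = (m-q)/(q(r-1)+k) is a non-negative integer. -/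
/-!
Put `A = k/r`, `x = qr/k + 1` and `d = Br/k`, so that `m = Bb + q = A (x + db - 1)` and
`x + d - 1 = r x`. In terms of the Rothe polynomials `R_n(x) = x/(x+dn) · binom(x+dn, n)`
the claimed value is `a b = b! A^b R_b(x) / m`, since
`binom(x+db-1, b) = (b(r-1)+1) R_b(x)`.

After the substitution `a t = t! A^t R_t(x) / m_t`, the cut-and-join recursion asks for
`Σ_{t_1+⋯+t_r=b} ∏ R_{t_j}(x)`, which Rothe's convolution identity
`Σ_{i+j=n} R_i(x) R_j(y) = R_n(x+y)` evaluates to `R_b(rx) = R_b(x+d-1)`; the absorption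
identity `(n+1)(x+d-1) R_{n+1}(x) = x (x+d(n+1)-1) R_n(x+d-1)` then closes the induction.
The convolution identity follows from the Pascal rule `R_{n+1}(y+1) = R_{n+1}(y) + R_n(y+d)`:
by induction on `n`, the difference of its two sides is a polynomial in `y` that is
`1`-periodic and vanishes at `0`, hence vanishes identically.
-/

open Finset Nat

/-- The generalized binomial coefficient `binom(α, n) = α(α-1)⋯(α-n+1)/n!`. -/
noncomputable def qbinom (α : ℚ) (n : ℕ) : ℚ :=
  (∏ i ∈ Finset.range n, (α - i)) / n !

namespace Polynomial

lemma eval_eq_eval_zero_of_eval_add_one {K : Type*} [Field K] [CharZero K]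
    (p : K[X]) (hp : ∀ y, p.eval (y + 1) = p.eval y) (y : K) : p.eval y = p.eval 0 := by
  have hroot : ∀ n : ℕ, (p - C (p.eval 0)).IsRoot n := by
    intro n
    induction n with
    | zero => simp
    | succ n ih => simpa [hp] using ih
  have hzero : p - C (p.eval 0) = 0 :=
    eq_zero_of_infinite_isRoot _ (Set.infinite_of_injective_forall_mem Nat.cast_injective hroot)
  simpa [sub_eq_zero] using congr_arg (eval y) hzero

end Polynomial

open Polynomial

lemma descPochhammer_succ_eval_add_one {R : Type*} [CommRing R] (n : ℕ) (y : R) :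
    (descPochhammer R (n + 1)).eval (y + 1) = (y + 1) * (descPochhammer R n).eval y := by
  simp [descPochhammer_succ_left]

lemma Finset.Nat.sum_antidiagonalTuple_succ {M : Type*} [AddCommMonoid M] (k n : ℕ)
    (F : (Fin (k + 1) → ℕ) → M) :
    ∑ t ∈ antidiagonalTuple (k + 1) n, F t
      = ∑ ij ∈ antidiagonal n, ∑ t ∈ antidiagonalTuple k ij.2, F (Fin.cons ij.1 t) := by
  have h : Multiset.Nat.antidiagonalTuple (k + 1) n = (Multiset.Nat.antidiagonal n).bind
      fun ij => (Multiset.Nat.antidiagonalTuple k ij.2).map (Fin.cons ij.1) := by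
    simp [Multiset.Nat.antidiagonalTuple, List.Nat.antidiagonalTuple, Multiset.Nat.antidiagonal,
      Multiset.coe_bind]
  simp only [Finset.sum, antidiagonalTuple, h, Multiset.map_bind, Multiset.sum_bind,
    Multiset.map_map]
  rfl

section Rothe

variable {K : Type*} [Field K]

/-- The Rothe polynomial `R_n(x) = x/(x+dn) · binom(x+dn, n)`, written without the division;
`R_n(x)` is the coefficient of `z^n` in `β(z)^x`, where `β = 1 + z β^d`. -/
noncomputable def rothePoly (d : K) : ℕ → K[X]
  | 0 => 1
  | n + 1 => C ((n + 1)! : K)⁻¹ * X * (descPochhammer K n).comp (X + C (d * (n + 1) - 1))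

noncomputable def rothe (d : K) (n : ℕ) (x : K) : K := (rothePoly d n).eval x

variable (d : K)

@[simp] lemma rothe_zero (x : K) : rothe d 0 x = 1 := by
  simp [rothe, rothePoly]

lemma rothe_succ (n : ℕ) (x : K) :
    rothe d (n + 1) x = x * (descPochhammer K n).eval (x + d * (n + 1) - 1) / (n + 1)! := by
  simp only [rothe, rothePoly, eval_mul, eval_C, eval_X, eval_comp, eval_add, add_sub_assoc]
  ring

lemma rothe_succ_apply_zero (n : ℕ) : rothe d (n + 1) 0 = 0 := by
  simp [rothe_succ]

variable [CharZero K]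

lemma rothe_succ_add_one (n : ℕ) (x : K) :
    rothe d (n + 1) (x + 1) = rothe d (n + 1) x + rothe d n (x + d) := by
  cases n with
  | zero => simp [rothe_succ]
  | succ n =>
    have h1 : x + 1 + d * ((n + 1 : ℕ) + 1) - 1 = x + d * (n + 2) - 1 + 1 := by push_cast; ring
    have h2 : x + d * ((n + 1 : ℕ) + 1) - 1 = x + d * (n + 2) - 1 := by push_cast; ring
    have h3 : x + d + d * ((n : ℕ) + 1) - 1 = x + d * (n + 2) - 1 := by ring
    rw [rothe_succ, rothe_succ, rothe_succ, h1, h2, h3, descPochhammer_succ_eval_add_one,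
      descPochhammer_succ_eval, factorial_succ (n + 1)]
    have : (n : K) + 1 + 1 ≠ 0 := by norm_cast
    push_cast
    field_simp
    ring

lemma sum_antidiagonal_rothe_mul_rothe (n : ℕ) (x y : K) :
    ∑ ij ∈ antidiagonal n, rothe d ij.1 x * rothe d ij.2 y = rothe d n (x + y) := by
  induction n generalizing y with
  | zero => simp
  | succ n ih =>
    set S : K → K := fun y => ∑ ij ∈ antidiagonal (n + 1), rothe d ij.1 x * rothe d ij.2 y
    have hS : ∀ y, S (y + 1) = S y + rothe d n (x + y + d) := by
      intro y
      simp only [S, Nat.sum_antidiagonal_succ', rothe_zero, rothe_succ_add_one, mul_add,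
        sum_add_distrib, ih, add_assoc]
    have hS0 : S 0 = rothe d (n + 1) x := by
      simp [S, Nat.sum_antidiagonal_succ', rothe_succ_apply_zero]
    set p : K[X] := ∑ ij ∈ antidiagonal (n + 1), C (rothe d ij.1 x) * rothePoly d ij.2
      - (rothePoly d (n + 1)).comp (X + C x)
    have hp : ∀ y, p.eval y = S y - rothe d (n + 1) (x + y) := by
      intro y
      simp [p, S, eval_finsetSum, rothe, add_comm x y]
    have hperiodic : ∀ y, p.eval (y + 1) = p.eval y := by
      intro y
      rw [hp, hp, hS, show x + (y + 1) = x + y + 1 by ring, rothe_succ_add_one]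
      ring
    have := p.eval_eq_eval_zero_of_eval_add_one hperiodic y
    rwa [hp, hp, hS0, add_zero, sub_self, sub_eq_zero] at this

lemma sum_antidiagonalTuple_prod_rothe (x : K) (ρ n : ℕ) :
    ∑ t ∈ antidiagonalTuple ρ n, ∏ j, rothe d (t j) x = rothe d n (ρ * x) := by
  induction ρ generalizing n with
  | zero => cases n <;> simp [rothe_succ_apply_zero]
  | succ ρ ih =>
    simp only [Nat.sum_antidiagonalTuple_succ, Fin.prod_univ_succ, Fin.cons_zero, Fin.cons_succ,
      ← mul_sum, ih, sum_antidiagonal_rothe_mul_rothe]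
    push_cast
    ring_nf

lemma succ_mul_rothe_succ (n : ℕ) (x : K) :
    (n + 1) * (x + d - 1) * rothe d (n + 1) x
      = x * (x + d * (n + 1) - 1) * rothe d n (x + d - 1) := by
  cases n with
  | zero =>
    rw [rothe_succ, rothe_zero]
    simp only [descPochhammer_zero, eval_one, Nat.cast_zero, zero_add, factorial_one, cast_one]
    ring
  | succ n =>
    have h1 : x + d * ((n + 1 : ℕ) + 1) - 1 = x + d * (n + 2) - 2 + 1 := by push_cast; ring
    have h2 : x + d - 1 + d * ((n : ℕ) + 1) - 1 = x + d * (n + 2) - 2 := by ring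
    rw [rothe_succ, rothe_succ, h1, h2, descPochhammer_succ_eval_add_one, factorial_succ (n + 1)]
    have : (n : K) + 1 + 1 ≠ 0 := by norm_cast
    push_cast
    field_simp

theorem eq_rothe_of_cutJoin_recursion {r : ℕ} {A d x : K} {m a : ℕ → K}
    (hr : (r : K) ≠ 0) (hx : x ≠ 0) (hdx : x + d - 1 = r * x)
    (hm : ∀ n, m n = A * (x + d * n - 1)) (hm0 : ∀ n, m n ≠ 0)
    (ha0 : a 0 = 1 / m 0)
    (harec : ∀ b, a (b + 1) = 1 / r * ∑ t ∈ antidiagonalTuple r b,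
      ((b ! : K) / ∏ j, ((t j)! : K)) * ∏ j, (m (t j) * a (t j))) (n : ℕ) :
    a n = n ! * A ^ n * rothe d n x / m n := by
  induction n using Nat.strong_induction_on with
  | _ n ih =>
  cases n with
  | zero => simp [ha0]
  | succ b =>
    have hterm : ∀ t ∈ antidiagonalTuple r b,
        ((b ! : K) / ∏ j, ((t j)! : K)) * ∏ j, (m (t j) * a (t j))
          = b ! * A ^ b * ∏ j, rothe d (t j) x := by
      intro t ht
      have hsum : ∑ j, t j = b := Nat.mem_antidiagonalTuple.mp ht
      have hmul : ∀ j, m (t j) * a (t j) = (t j)! * (A ^ t j * rothe d (t j) x) := by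
        intro j
        have hlt : t j < b + 1 :=
          Nat.lt_succ_of_le (hsum ▸ single_le_sum (fun _ _ => Nat.zero_le _) (mem_univ j))
        rw [ih (t j) hlt, mul_div_cancel₀ _ (hm0 _)]
        ring
      have hfac : ∏ j, ((t j)! : K) ≠ 0 :=
        prod_ne_zero_iff.mpr fun j _ => Nat.cast_ne_zero.mpr (factorial_ne_zero _)
      simp only [hmul, prod_mul_distrib, prod_pow_eq_pow_sum, hsum]
      field_simp
    have habsorb := succ_mul_rothe_succ d b x
    rw [hdx] at habsorb
    rw [harec, sum_congr rfl hterm, ← mul_sum, sum_antidiagonalTuple_prod_rothe,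
      eq_div_iff (hm0 _), hm, factorial_succ]
    push_cast
    field_simp
    apply mul_left_cancel₀ hx
    linear_combination -(b ! * A ^ (b + 1)) * habsorb

end Rothe

lemma rothe_mul_eq_qbinom (d x : ℚ) (n : ℕ) :
    (x + (d - 1) * n) * rothe d n x = x * qbinom (x + d * n - 1) n := by
  cases n with
  | zero => simp [qbinom]
  | succ n =>
    rw [rothe_succ, qbinom, ← descPochhammer_eval_eq_prod_range, descPochhammer_succ_eval]
    push_cast
    ring

/-- Let `q, r, k` be positive integers, `B = q(r-1)+k`,
`A = k/r ∈ ℚ`, and let `a : ℕ → ℚ` be the genus-0 one-part `(k,r,q)`-leaky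
completed-cycles Hurwitz numbers, determined by `a 0 = 1/q` and the tropical
cut-and-join recursion.  Then for every `b ∈ ℕ`, setting `m = B·b + q`,
`a b = (b! / (m·(b·(r-1)+1))) · binom(m/A, b) · A^b`, i.e. the genus-0 one-part
leaky Hurwitz number `lh^{k,r,q}_{0;(m)}` equals
`b!/(m·(b(r-1)+1)) · binom(m·r/k, b) · (k/r)^b`. -/
theorem leaky_one_part_closed_formula
    (q r k : ℕ) (hq : 0 < q) (hr : 0 < r) (hk : 0 < k)
    (B : ℕ) (hB : B = q * (r - 1) + k)
    (a : ℕ → ℚ)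
    (ha0 : a 0 = 1 / q)
    (harec : ∀ b : ℕ, 1 ≤ b → a b = (1 / r : ℚ) *
      ∑ t ∈ Finset.Nat.antidiagonalTuple r (b - 1),
        (((b - 1)! : ℚ) / ∏ j, ((t j)! : ℚ)) *
          ∏ j, (((B * t j + q : ℕ) : ℚ) * a (t j))) :
    ∀ b : ℕ,
      a b = ((b ! : ℚ) / (((B * b + q : ℕ) : ℚ) * (b * (r - 1) + 1))) *
        qbinom (((B * b + q : ℕ) : ℚ) * r / k) b * ((k : ℚ) / r) ^ b := by
  intro b
  set x : ℚ := q * r / k + 1 with hx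
  set d : ℚ := B * r / k with hd
  have hdx : x + d - 1 = r * x := by
    rw [hx, hd, hB]
    push_cast [Nat.cast_sub hr]
    field_simp
    ring
  have hm (n : ℕ) : ((B * n + q : ℕ) : ℚ) = k / r * (x + d * n - 1) := by
    rw [hx, hd]
    push_cast
    field_simp
    ring
  have hsol := eq_rothe_of_cutJoin_recursion (m := fun n => ((B * n + q : ℕ) : ℚ)) (d := d)
    (by positivity) (by positivity) hdx hm (fun n => by positivity) (by simpa using ha0)
    (fun b => by simpa using harec (b + 1) (by omega)) b
  have hbinom : qbinom (x + d * b - 1) b = (b * (r - 1) + 1) * rothe d b x := by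
    apply mul_left_cancel₀ (show x ≠ 0 by positivity)
    linear_combination -(rothe_mul_eq_qbinom d x b) + b * rothe d b x * hdx
  have hr1 : (1 : ℚ) ≤ r := by exact_mod_cast hr
  have hpos : (b : ℚ) * (r - 1) + 1 ≠ 0 := by nlinarith
  rw [hsol, show ((B * b + q : ℕ) : ℚ) * r / k = x + d * b - 1 by rw [hm]; field_simp, hbinom]
  field_simp
end

section
/- Let q, r, k be positive integers, B = q(r-1)+k, g = gcd(q·r,k), ρ = q·r/g, κ = k/g, and let X̂, Ŷ ∈ ℚ⟦z⟧ be as in the context. Then: (i) X̂^{(q-1)·κ} = Ŷ^κ · (1 - (k/r)·Ŷ^{r-1}·X̂^{r-1+k})^{ρ+κ} holds in ℚ⟦z⟧; and (ii) Ŷ equals the substitution Y(X̂) of X̂ into the unique power series Y ∈ ℚ⟦X⟧ supported in degrees ≥ q-1, with coefficient 1 in degree q-1, satisfying X^{(q-1)·κ} = Y^κ(1-(k/r)Y^{r-1}X^{r-1+k})^{ρ+κ}. (X̂ has zero constant term, so the substitution is well defined.) -/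
open Finset Nat PowerSeries

/-- The formal binomial series `(1+u)^α = Σ_{n≥0} binom(α,n)·u^n`, for a power
series `u` with zero constant term (for such `u`, the coefficient of `X^d` of
the infinite sum is the displayed finite sum, since `u^n` has order `≥ n`). -/
noncomputable def binomPow (α : ℚ) (u : PowerSeries ℚ) : PowerSeries ℚ :=
  PowerSeries.mk fun d =>
    ∑ n ∈ Finset.range (d + 1), qbinom α n * PowerSeries.coeff d (u ^ n)

/-- Substitution `f(u)` of a power series `u` with zero constant term into the
power series `f` (for such `u`, the coefficient of `X^d` of `Σ_n f_n u^n` is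
the displayed finite sum, since `u^n` has order `≥ n`). -/
noncomputable def psComp (f u : PowerSeries ℚ) : PowerSeries ℚ :=
  PowerSeries.mk fun d =>
    ∑ n ∈ Finset.range (d + 1), PowerSeries.coeff n f * PowerSeries.coeff d (u ^ n)

/-- The parametrisation `X̂(z) = z·(1+(k/r)·z^B)^{-r/k}`, where `B = q(r-1)+k`. -/
noncomputable def Xhat (q r k : ℕ) : PowerSeries ℚ :=
  PowerSeries.X *
    binomPow (-(r : ℚ) / k)
      (PowerSeries.C ((k : ℚ) / r) * PowerSeries.X ^ (q * (r - 1) + k))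

/-- The parametrisation `Ŷ(z) = z^{q-1}·(1+(k/r)·z^B)^{(r+k)/k}`, where `B = q(r-1)+k`. -/
noncomputable def Yhat (q r k : ℕ) : PowerSeries ℚ :=
  PowerSeries.X ^ (q - 1) *
    binomPow (((r : ℚ) + k) / k)
      (PowerSeries.C ((k : ℚ) / r) * PowerSeries.X ^ (q * (r - 1) + k))

/-!
`X̂` and `Ŷ` are monomials times powers `(1 + u)^α` of one series `u = (k/r)·z^B`, and these
powers multiply by adding exponents (Chu–Vandermonde). Hence `1 - (k/r)·Ŷ^{r-1}·X̂^{r-1+k}`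
collapses to `(1 + u)⁻¹`, and (i) becomes the exponent identity
`(q-1)·κ·(-r/k) = κ·(r+k)/k - (ρ+κ)`, i.e. `ρ·k = q·r·κ`.

For (ii), substituting `X̂` into the equation for `Y` shows that `Y(X̂)` and `Ŷ` solve the same
equation `W^κ·(1 - (k/r)·W^{r-1}·A)^{ρ+κ} = X̂^{(q-1)·κ}` with `A = X̂^{r-1+k}`. Writing
`W = z^{q-1}·U` with `U(0) = 1`, the difference `U₁ - U₂` of two solutions times a series with
constant coefficient `κ ≠ 0` vanishes, so `U₁ = U₂`.
-/

lemma qbinom_eq_choose (α : ℚ) (n : ℕ) : qbinom α n = Ring.choose α n := by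
  rw [Ring.choose_eq_smul, ← Polynomial.aeval_eq_smeval, Polynomial.aeval_def,
    Polynomial.eval₂_eq_eval_map, descPochhammer_map, descPochhammer_eval_eq_prod_range,
    qbinom, smul_eq_mul, div_eq_inv_mul]

namespace PowerSeries

variable {R A : Type*}

theorem binomialSeries_pow [CommRing R] [BinomialRing R] [Ring A] [Algebra R A] (r : R)
    (n : ℕ) : binomialSeries A r ^ n = binomialSeries A (n * r) := by
  induction n with
  | zero => simp
  | succ n ih => rw [pow_succ, ih, ← binomialSeries_add]; push_cast; ring_nf

theorem one_add_X_mul_binomialSeries_neg_one [CommRing R] [BinomialRing R] [Ring A]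
    [Algebra R A] : (1 + X) * binomialSeries A (-1 : R) = 1 := by
  have h := binomialSeries_nat (R := R) (A := A) 1
  rw [Nat.cast_one, pow_one] at h
  rw [← h, ← binomialSeries_add, add_neg_cancel, binomialSeries_zero]

theorem coeff_pow_eq_zero_of_lt [CommSemiring R] {u : R⟦X⟧} (hu : constantCoeff u = 0)
    {d n : ℕ} (h : d < n) : coeff d (u ^ n) = 0 :=
  X_pow_dvd_iff.mp (pow_dvd_pow_of_dvd (X_dvd_iff.mpr hu) n) d h

theorem eq_of_pow_mul_one_sub_mul_pow_eq [CommRing R] [IsDomain R] [CharZero R]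
    {U₁ U₂ B : R⟦X⟧} {κ m e : ℕ} (hκ : κ ≠ 0) (hU₁ : constantCoeff U₁ = 1)
    (hU₂ : constantCoeff U₂ = 1) (hB : constantCoeff B = 0)
    (h : U₁ ^ κ * (1 - B * U₁ ^ m) ^ e = U₂ ^ κ * (1 - B * U₂ ^ m) ^ e) : U₁ = U₂ := by
  set V₁ := 1 - B * U₁ ^ m with hV₁
  set V₂ := 1 - B * U₂ ^ m with hV₂
  set S := ∑ i ∈ Finset.range κ, U₁ ^ i * U₂ ^ (κ - 1 - i)
  set T := ∑ i ∈ Finset.range m, U₁ ^ i * U₂ ^ (m - 1 - i)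
  set P := ∑ i ∈ Finset.range e, V₁ ^ i * V₂ ^ (e - 1 - i)
  have hS : S * (U₁ - U₂) = U₁ ^ κ - U₂ ^ κ := geom_sum₂_mul U₁ U₂ κ
  have hT : T * (U₁ - U₂) = U₁ ^ m - U₂ ^ m := geom_sum₂_mul U₁ U₂ m
  have hP : P * (V₁ - V₂) = V₁ ^ e - V₂ ^ e := geom_sum₂_mul V₁ V₂ e
  have hV : V₁ - V₂ = -B * (U₁ ^ m - U₂ ^ m) := by rw [hV₁, hV₂]; ring
  have hfactor : (U₁ - U₂) * (S * V₁ ^ e - U₂ ^ κ * P * B * T) = 0 := by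
    linear_combination
      h + V₁ ^ e * hS - U₂ ^ κ * P * B * hT + U₂ ^ κ * hP - U₂ ^ κ * P * hV
  have hcoeff : constantCoeff (S * V₁ ^ e - U₂ ^ κ * P * B * T) = κ := by
    simp [S, V₁, hU₁, hU₂, hB]
  have hne : S * V₁ ^ e - U₂ ^ κ * P * B * T ≠ 0 := by
    intro h0
    rw [h0, map_zero] at hcoeff
    exact hκ (by exact_mod_cast hcoeff.symm)
  exact sub_eq_zero.mp ((mul_eq_zero.mp hfactor).resolve_right hne)

theorem eq_of_X_pow_mul_pow_mul_one_sub_pow_eq [CommRing R] [IsDomain R] [CharZero R]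
    {U₁ U₂ B : R⟦X⟧} {p κ m e : ℕ} (c : R) (hκ : κ ≠ 0) (hU₁ : constantCoeff U₁ = 1)
    (hU₂ : constantCoeff U₂ = 1) (hB : constantCoeff B = 0)
    (h : (X ^ p * U₁) ^ κ * (1 - C c * (X ^ p * U₁) ^ m * B) ^ e =
      (X ^ p * U₂) ^ κ * (1 - C c * (X ^ p * U₂) ^ m * B) ^ e) : U₁ = U₂ := by
  have hunit : ∀ U : R⟦X⟧, (X ^ p * U) ^ κ * (1 - C c * (X ^ p * U) ^ m * B) ^ e =
      X ^ (p * κ) * (U ^ κ * (1 - C c * X ^ (p * m) * B * U ^ m) ^ e) := by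
    intro U; ring
  rw [hunit, hunit] at h
  refine eq_of_pow_mul_one_sub_mul_pow_eq hκ hU₁ hU₂ ?_
    (mul_left_cancel₀ (pow_ne_zero _ X_ne_zero) h)
  simp [hB]

end PowerSeries

open PowerSeries

section Substitution

variable {u : ℚ⟦X⟧}

lemma psComp_eq_subst (hu : constantCoeff u = 0) (f : ℚ⟦X⟧) : psComp f u = f.subst u := by
  ext d
  rw [psComp, coeff_mk, coeff_subst' (HasSubst.of_constantCoeff_zero' hu),
    finsum_eq_sum_of_support_subset _ (s := Finset.range (d + 1))]
  · rfl
  · intro n hn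
    rw [Finset.coe_range, Set.mem_Iio]
    by_contra h
    exact hn (by simp only [coeff_pow_eq_zero_of_lt hu (by omega : d < n), smul_zero])

lemma constantCoeff_subst_of_constantCoeff_eq_zero (hu : constantCoeff u = 0) (f : ℚ⟦X⟧) :
    constantCoeff (f.subst u) = constantCoeff f := by
  rw [← psComp_eq_subst hu, ← coeff_zero_eq_constantCoeff_apply,
    ← coeff_zero_eq_constantCoeff_apply]
  simp [psComp]

lemma binomPow_eq_subst (hu : constantCoeff u = 0) (α : ℚ) :
    binomPow α u = (PowerSeries.binomialSeries ℚ α).subst u := by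
  rw [← psComp_eq_subst hu]
  simp [binomPow, psComp, qbinom_eq_choose]

lemma constantCoeff_binomPow (α : ℚ) (u : ℚ⟦X⟧) : constantCoeff (binomPow α u) = 1 := by
  rw [← coeff_zero_eq_constantCoeff_apply]
  simp [binomPow, qbinom]

lemma binomPow_mul_binomPow (hu : constantCoeff u = 0) (α β : ℚ) :
    binomPow α u * binomPow β u = binomPow (α + β) u := by
  simp only [binomPow_eq_subst hu, ← subst_mul (HasSubst.of_constantCoeff_zero' hu),
    binomialSeries_add]

lemma binomPow_pow (hu : constantCoeff u = 0) (α : ℚ) (n : ℕ) :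
    binomPow α u ^ n = binomPow (n * α) u := by
  simp only [binomPow_eq_subst hu, ← subst_pow (HasSubst.of_constantCoeff_zero' hu),
    binomialSeries_pow]

lemma one_sub_mul_binomPow_neg_one (hu : constantCoeff u = 0) :
    1 - u * binomPow (-1) u = binomPow (-1) u := by
  have hσ := HasSubst.of_constantCoeff_zero' hu
  have h := congrArg (substAlgHom hσ) (one_add_X_mul_binomialSeries_neg_one (R := ℚ) (A := ℚ))
  rw [map_mul, map_add, map_one, substAlgHom_X, coe_substAlgHom,
    ← binomPow_eq_subst hu] at h
  linear_combination -h

end Substitution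

section Parametrisation

variable {q r k : ℕ}

noncomputable def binomArg (q r k : ℕ) : ℚ⟦X⟧ := C ((k : ℚ) / r) * X ^ (q * (r - 1) + k)

lemma constantCoeff_binomArg (hk : 0 < k) : constantCoeff (binomArg q r k) = 0 := by
  simp [binomArg, hk.ne']

lemma constantCoeff_Xhat : constantCoeff (Xhat q r k) = 0 := by
  simp [Xhat]

lemma Xhat_pow (hk : 0 < k) (m : ℕ) :
    Xhat q r k ^ m = X ^ m * binomPow (m * (-(r : ℚ) / k)) (binomArg q r k) := by
  rw [Xhat, mul_pow, ← binomPow_pow (constantCoeff_binomArg hk)]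
  rfl

lemma Yhat_pow (hk : 0 < k) (m : ℕ) :
    Yhat q r k ^ m = X ^ ((q - 1) * m) * binomPow (m * (((r : ℚ) + k) / k)) (binomArg q r k) := by
  rw [Yhat, mul_pow, ← pow_mul, ← binomPow_pow (constantCoeff_binomArg hk)]
  rfl

lemma Yhat_pow_mul_Xhat_pow (hk : 0 < k) (m n : ℕ) :
    Yhat q r k ^ m * Xhat q r k ^ n = X ^ ((q - 1) * m + n) *
      binomPow (m * (((r : ℚ) + k) / k) + n * (-(r : ℚ) / k)) (binomArg q r k) := by
  rw [Yhat_pow hk, Xhat_pow hk, pow_add, ← binomPow_mul_binomPow (constantCoeff_binomArg hk)]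
  ring

lemma one_sub_C_mul_Yhat_pow_mul_Xhat_pow (hq : 0 < q) (hr : 0 < r) (hk : 0 < k) :
    1 - C ((k : ℚ) / r) * Yhat q r k ^ (r - 1) * Xhat q r k ^ (r - 1 + k) =
      binomPow (-1) (binomArg q r k) := by
  have hdeg : (q - 1) * (r - 1) + (r - 1 + k) = q * (r - 1) + k := by
    obtain ⟨q, rfl⟩ := Nat.exists_eq_add_one_of_ne_zero hq.ne'
    rw [Nat.add_sub_cancel]
    ring
  have hexp :
      ((r - 1 : ℕ) : ℚ) * (((r : ℚ) + k) / k) + ((r - 1 + k : ℕ) : ℚ) * (-(r : ℚ) / k) = -1 := by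
    have hk0 : (k : ℚ) ≠ 0 := by positivity
    push_cast [Nat.cast_sub hr]
    field_simp
    ring
  rw [mul_assoc, Yhat_pow_mul_Xhat_pow hk, hdeg, hexp, ← mul_assoc]
  exact one_sub_mul_binomPow_neg_one (constantCoeff_binomArg hk)

theorem Xhat_pow_eq_Yhat_pow_mul {ρ κ : ℕ} (hq : 0 < q) (hr : 0 < r) (hk : 0 < k)
    (hρκ : ρ * k = q * r * κ) :
    Xhat q r k ^ ((q - 1) * κ) = Yhat q r k ^ κ *
      (1 - C ((k : ℚ) / r) * Yhat q r k ^ (r - 1) * Xhat q r k ^ (r - 1 + k)) ^ (ρ + κ) := by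
  have hu := constantCoeff_binomArg (q := q) (r := r) hk
  have hexp : (((q - 1) * κ : ℕ) : ℚ) * (-(r : ℚ) / k) =
      (κ : ℚ) * (((r : ℚ) + k) / k) + ((ρ + κ : ℕ) : ℚ) * (-1) := by
    have hk0 : (k : ℚ) ≠ 0 := by positivity
    have hρκ' : (ρ : ℚ) * k = q * r * κ := by exact_mod_cast hρκ
    push_cast [Nat.cast_sub hq]
    field_simp
    linear_combination hρκ'
  rw [one_sub_C_mul_Yhat_pow_mul_Xhat_pow hq hr hk, Xhat_pow hk, Yhat_pow hk, binomPow_pow hu,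
    mul_assoc, binomPow_mul_binomPow hu, hexp]

theorem Yhat_eq_psComp_Xhat {ρ κ : ℕ} (hq : 0 < q) (hr : 0 < r) (hk : 0 < k) (hκ : κ ≠ 0)
    (hρκ : ρ * k = q * r * κ) (Y : ℚ⟦X⟧) (hY₀ : ∀ n < q - 1, coeff n Y = 0)
    (hY₁ : coeff (q - 1) Y = 1)
    (hY : (X : ℚ⟦X⟧) ^ ((q - 1) * κ) =
      Y ^ κ * (1 - C ((k : ℚ) / r) * Y ^ (r - 1) * X ^ (r - 1 + k)) ^ (ρ + κ)) :
    Yhat q r k = psComp Y (Xhat q r k) := by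
  set σ : ℚ⟦X⟧ →ₐ[ℚ] ℚ⟦X⟧ :=
    substAlgHom (HasSubst.of_constantCoeff_zero' (constantCoeff_Xhat (q := q) (r := r) (k := k)))
  have hσX : σ X = Xhat q r k := substAlgHom_X _
  have hσY :
      Yhat q r k ^ κ * (1 - C ((k : ℚ) / r) * Yhat q r k ^ (r - 1) * Xhat q r k ^ (r - 1 + k)) ^
          (ρ + κ) =
        σ Y ^ κ * (1 - C ((k : ℚ) / r) * σ Y ^ (r - 1) * Xhat q r k ^ (r - 1 + k)) ^ (ρ + κ) := by
    have h := congrArg σ hY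
    simp only [map_mul, map_pow, map_sub, map_one, hσX, ← algebraMap_eq, σ.commutes] at h
    rwa [algebraMap_eq, Xhat_pow_eq_Yhat_pow_mul hq hr hk hρκ] at h
  rw [psComp_eq_subst constantCoeff_Xhat, ← coe_substAlgHom]
  change Yhat q r k = σ Y
  obtain ⟨U, rfl⟩ := X_pow_dvd_iff.mpr hY₀
  have hU : constantCoeff U = 1 := by simpa [coeff_X_pow_mul'] using hY₁
  have hσU : σ (X ^ (q - 1) * U) =
      X ^ (q - 1) * (binomPow ((q - 1 : ℕ) * (-(r : ℚ) / k)) (binomArg q r k) * σ U) := by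
    rw [map_mul, map_pow, hσX, Xhat_pow hk, mul_assoc]
  rw [hσU] at hσY ⊢
  rw [Yhat]
  congr 1
  refine eq_of_X_pow_mul_pow_mul_one_sub_pow_eq _ hκ (constantCoeff_binomPow _ _) ?_
    (by simp [constantCoeff_Xhat, hk.ne']) hσY
  rw [map_mul, constantCoeff_binomPow, one_mul, coe_substAlgHom,
    constantCoeff_subst_of_constantCoeff_eq_zero constantCoeff_Xhat, hU]

end Parametrisation

/-- Let `q, r, k` be positive integers, `B = q(r-1)+k`,
`g = gcd(q·r,k)`, `ρ = q·r/g`, `κ = k/g`, and let `X̂, Ŷ ∈ ℚ⟦z⟧` be the rational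
parametrisation above.  Then (i) `X̂^{(q-1)·κ} = Ŷ^κ·(1-(k/r)·Ŷ^{r-1}·X̂^{r-1+k})^{ρ+κ}`
holds in `ℚ⟦z⟧`; and (ii) `Ŷ` equals the substitution `Y(X̂)` of `X̂` into the
unique power series `Y ∈ ℚ⟦X⟧` supported in degrees `≥ q-1`, with coefficient `1`
in degree `q-1`, satisfying `X^{(q-1)·κ} = Y^κ(1-(k/r)Y^{r-1}X^{r-1+k})^{ρ+κ}`. -/
theorem leaky_spectral_curve_parametrisation
    (q r k : ℕ) (hq : 0 < q) (hr : 0 < r) (hk : 0 < k)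
    (g ρ κ : ℕ) (hg : g = Nat.gcd (q * r) k) (hρ : ρ = q * r / g) (hκ : κ = k / g) :
    ((Xhat q r k) ^ ((q - 1) * κ) =
      (Yhat q r k) ^ κ *
        (1 - PowerSeries.C ((k : ℚ) / r) * (Yhat q r k) ^ (r - 1) *
            (Xhat q r k) ^ (r - 1 + k)) ^ (ρ + κ)) ∧
    (∀ Y : PowerSeries ℚ,
      (∀ n : ℕ, n < q - 1 → PowerSeries.coeff n Y = 0) →
      PowerSeries.coeff (q - 1) Y = 1 →
      (PowerSeries.X : PowerSeries ℚ) ^ ((q - 1) * κ) =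
        Y ^ κ *
          (1 - PowerSeries.C ((k : ℚ) / r) * Y ^ (r - 1) *
              PowerSeries.X ^ (r - 1 + k)) ^ (ρ + κ) →
      Yhat q r k = psComp Y (Xhat q r k)) := by
  subst hg hρ hκ
  have hρκ : q * r / Nat.gcd (q * r) k * k = q * r * (k / Nat.gcd (q * r) k) := by
    rw [Nat.div_mul_right_comm (Nat.gcd_dvd_left _ _), Nat.mul_div_assoc _ (Nat.gcd_dvd_right _ _)]
  have hκ : k / Nat.gcd (q * r) k ≠ 0 :=
    (Nat.div_pos (Nat.le_of_dvd hk (Nat.gcd_dvd_right _ _)) (Nat.gcd_pos_of_pos_right _ hk)).ne'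
  exact ⟨Xhat_pow_eq_Yhat_pow_mul hq hr hk hρκ, Yhat_eq_psComp_Xhat hq hr hk hκ hρκ⟩
end

section
/- Let R be a commutative ring, k ≥ 1 an integer, and f = Σ_{n≥0} f_n X^n ∈ R⟦X⟧, with the convention f_n = 0 for n < 0. Then in the ring of formal power series in two variables X₁, X₂ over R: (X₂ - X₁) · Σ_{l,m ≥ 1} f_{l+m-k} · X₁^l X₂^m = X₁·X₂·( X₂^{k-1}·f(X₂) - X₁^{k-1}·f(X₁) ), where f(X_i) denotes the substitution of the variable X_i into f. -/
open Finset

/-- Build a formal power series in two variables from its coefficient function. -/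
def mvMk {R : Type*} [CommRing R] (f : (Fin 2 →₀ ℕ) → R) : MvPowerSeries (Fin 2) R := f

/-- The two-variable power series `Σ_{l,m ≥ 1} f_{l+m-k} · X₁^l X₂^m`, with the
convention that `f_n = 0` for `n < 0`. -/
noncomputable def doubleSum (R : Type*) [CommRing R] (k : ℕ) (f : PowerSeries R) :
    MvPowerSeries (Fin 2) R :=
  mvMk fun e =>
    if 1 ≤ e 0 ∧ 1 ≤ e 1 ∧ k ≤ e 0 + e 1 then
      PowerSeries.coeff (e 0 + e 1 - k) f
    else 0

/-- The substitution `f(Xᵢ)` of the variable `Xᵢ` into the one-variable power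
series `f`, as a two-variable power series. -/
noncomputable def onVar (R : Type*) [CommRing R] (i : Fin 2) (f : PowerSeries R) :
    MvPowerSeries (Fin 2) R :=
  mvMk fun e =>
    if e = Finsupp.single i (e i) then PowerSeries.coeff (e i) f else 0

/-!
The coefficients of `X^k * f` are exactly the `f_{n-k}` with the convention `f_n = 0` for
`n < 0`, so replacing `f` by `g = X^k * f` reduces the identity to the case `k = 0`, i.e. to
`(X₂ - X₁) · Σ_{l,m ≥ 1} g_{l+m} X₁^l X₂^m = X₁ g(X₂) - X₂ g(X₁)`. Its coefficient at
`X₁^a X₂^b` is `g_{a+b-1}` (present when `a ≥ 1, b ≥ 2`) minus `g_{a+b-1}` (present when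
`a ≥ 2, b ≥ 1`): the interior cancels and only the lines `a = 1` and `b = 1` survive, except
at the corners `(0, 1)` and `(1, 0)`, where the right side is `∓ g₀`, which vanishes as
`k ≥ 1`.
-/

theorem Finsupp.eq_single_iff_forall_ne_eq_zero {ι M : Type*} [Zero M] (e : ι →₀ M) (i : ι) :
    e = Finsupp.single i (e i) ↔ ∀ j ≠ i, e j = 0 := by
  rw [Finsupp.ext_iff]
  refine forall_congr' fun j => ?_
  by_cases h : j = i <;> simp [h, eq_comm]

theorem MvPowerSeries.coeff_X_mul_eq_ite {σ R : Type*} [CommSemiring R] (i : σ)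
    (φ : MvPowerSeries σ R) (e : σ →₀ ℕ) :
    coeff e (X i * φ) = if 1 ≤ e i then coeff (e - Finsupp.single i 1) φ else 0 := by
  simp only [X, coeff_monomial_mul, one_mul, Finsupp.single_le_iff]

section TwoVariables

open MvPowerSeries

variable {R : Type*} [CommRing R]

theorem coeff_doubleSum (k : ℕ) (f : PowerSeries R) (e : Fin 2 →₀ ℕ) :
    coeff e (doubleSum R k f) =
      if 1 ≤ e 0 ∧ 1 ≤ e 1 ∧ k ≤ e 0 + e 1 then PowerSeries.coeff (e 0 + e 1 - k) f else 0 :=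
  rfl

theorem coeff_onVar (i : Fin 2) (f : PowerSeries R) (e : Fin 2 →₀ ℕ) :
    coeff e (onVar R i f) = if ∀ j ≠ i, e j = 0 then PowerSeries.coeff (e i) f else 0 := by
  simp only [← Finsupp.eq_single_iff_forall_ne_eq_zero]
  rfl

theorem X_pow_mul_onVar (i : Fin 2) (n : ℕ) (f : PowerSeries R) :
    X i ^ n * onVar R i f = onVar R i (PowerSeries.X ^ n * f) := by
  ext e
  simp only [X_pow_eq, coeff_monomial_mul, one_mul, Finsupp.single_le_iff, coeff_onVar,
    PowerSeries.coeff_X_pow_mul', Finsupp.tsub_apply]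
  by_cases h : n ≤ e i
  · simp +contextual [h]
  · simp [h]

theorem doubleSum_eq_doubleSum_zero (k : ℕ) (f : PowerSeries R) :
    doubleSum R k f = doubleSum R 0 (PowerSeries.X ^ k * f) := by
  ext e
  simp only [coeff_doubleSum, PowerSeries.coeff_X_pow_mul', zero_le, and_true, Nat.sub_zero]
  split_ifs <;> simp_all

theorem X_sub_X_mul_doubleSum_zero {g : PowerSeries R} (hg : PowerSeries.constantCoeff g = 0) :
    (X 1 - X 0) * doubleSum R 0 g = X 0 * onVar R 1 g - X 1 * onVar R 0 g := by
  ext e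
  simp only [sub_mul, map_sub, coeff_X_mul_eq_ite, coeff_onVar, coeff_doubleSum,
    Finsupp.tsub_apply, Finsupp.single_eq_same, Finsupp.single_eq_of_ne, ne_eq, zero_ne_one,
    one_ne_zero, not_false_eq_true, tsub_zero, zero_le, and_true, true_and, Fin.forall_fin_two,
    forall_const, not_true_eq_false, IsEmpty.forall_iff]
  generalize e 0 = a, e 1 = b
  rcases a with _ | _ | a <;> rcases b with _ | _ | b <;> simp [hg] <;> ring_nf

end TwoVariables

/-- Let `R` be a commutative ring, `k ≥ 1` an integer, and
`f = Σ_{n≥0} f_n X^n ∈ R⟦X⟧`, with the convention `f_n = 0` for `n < 0`.  Then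
in the ring of formal power series in two variables `X₁, X₂` over `R`:
`(X₂ - X₁) · Σ_{l,m ≥ 1} f_{l+m-k} · X₁^l X₂^m
  = X₁·X₂·( X₂^{k-1}·f(X₂) - X₁^{k-1}·f(X₁) )`. -/
theorem two_variable_generating_function_lemma
    (R : Type*) [CommRing R] (k : ℕ) (hk : 1 ≤ k) (f : PowerSeries R) :
    (MvPowerSeries.X 1 - MvPowerSeries.X 0) * doubleSum R k f =
      MvPowerSeries.X 0 * MvPowerSeries.X 1 *
        ((MvPowerSeries.X 1) ^ (k - 1) * onVar R 1 f -
          (MvPowerSeries.X 0) ^ (k - 1) * onVar R 0 f) := by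
  have X_mul_X_pow : ∀ i : Fin 2,
      MvPowerSeries.X (R := R) i * MvPowerSeries.X i ^ (k - 1) = MvPowerSeries.X i ^ k :=
    fun i => by rw [← pow_succ', Nat.sub_add_cancel hk]
  have hg : PowerSeries.constantCoeff (PowerSeries.X ^ k * f) = 0 := by
    simp [Nat.one_le_iff_ne_zero.mp hk]
  open MvPowerSeries in
  calc (X 1 - X 0) * doubleSum R k f
      = (X 1 - X 0) * doubleSum R 0 (PowerSeries.X ^ k * f) := by
        rw [doubleSum_eq_doubleSum_zero]
    _ = X 0 * onVar R 1 (PowerSeries.X ^ k * f) - X 1 * onVar R 0 (PowerSeries.X ^ k * f) :=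
        X_sub_X_mul_doubleSum_zero hg
    _ = X 0 * X 1 * (X 1 ^ (k - 1) * onVar R 1 f - X 0 ^ (k - 1) * onVar R 0 f) := by
        rw [← X_pow_mul_onVar, ← X_pow_mul_onVar, ← X_mul_X_pow, ← X_mul_X_pow]
        ring
end

section
/- Let A be a commutative ℚ-algebra, u : A → A an arbitrary function, and k, m ∈ A. For n ∈ ℕ and s ∈ A define φ_n(s) = Σ_{i=0}^n ((-1)^{n-i}/(i!·(n-i)!)) · ∏_{j=0}^{i-1} u(s + (m + (2j+1-n)·k)/2) · ∏_{j=i}^{n-1} u(s + (-m + (2j+1-n)·k)/2). Then φ_0(s) = 1 for all s, and for all n ∈ ℕ and s ∈ A: (n+1)·φ_{n+1}(s) = u(s + (m - n·k)/2)·φ_n(s + k/2) - u(s - (m - n·k)/2)·φ_n(s - k/2). -/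
/-!
Since `1 / (i! (n - i)!) = C(n, i) / n!`, `φ_n(s)` is `1 / n!` times an alternating binomial sum of
mixed products `∏_{j < i} f j * ∏_{i ≤ j < n} g j`. The shifts `s ± k/2` turn the level-`n`
arguments into level-`(n + 1)` ones, and multiplying by `u` at `f 0`, resp. `g n`, extends a
level-`n` product to a level-`(n + 1)` one, so the recursion reduces to Pascal's rule
`C(n + 1, i) = C(n, i) + C(n, i - 1)`.
-/

open Finset

section MixedProduct

variable {M : Type*} [CommMonoid M]

def mixedProduct (f g : ℕ → M) (n i : ℕ) : M :=
  (∏ j ∈ range i, f j) * ∏ j ∈ Ico i n, g j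

theorem mul_mixedProduct_succ (f g : ℕ → M) (n i : ℕ) :
    f 0 * mixedProduct (fun j ↦ f (j + 1)) (fun j ↦ g (j + 1)) n i =
      mixedProduct f g (n + 1) (i + 1) := by
  rw [mixedProduct, mixedProduct, prod_range_succ', ← prod_Ico_add', ← mul_assoc, mul_comm (f 0)]

theorem mul_mixedProduct_of_le (f g : ℕ → M) {n i : ℕ} (h : i ≤ n) :
    g n * mixedProduct f g n i = mixedProduct f g (n + 1) i := by
  rw [mixedProduct, mixedProduct, prod_Ico_succ_top h, mul_left_comm, mul_comm (g n)]

end MixedProduct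

section MixedProductSum

variable {A : Type*} [CommRing A] [Algebra ℚ A]

def mixedProductSum (f g : ℕ → A) (n : ℕ) : A :=
  ∑ i ∈ range (n + 1),
    ((-1 : ℚ) ^ (n - i) / (i.factorial * (n - i).factorial)) • mixedProduct f g n i

theorem mixedProductSum_eq_smul_sum_choose (f g : ℕ → A) (n : ℕ) :
    mixedProductSum f g n =
      (n.factorial : ℚ)⁻¹ •
        ∑ i ∈ range (n + 1), n.choose i • (-1 : ℚ) ^ (n - i) • mixedProduct f g n i := by
  rw [mixedProductSum, smul_sum]
  refine sum_congr rfl fun i hi ↦ ?_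
  have hin : i ≤ n := Nat.lt_succ_iff.mp (mem_range.mp hi)
  rw [← Nat.cast_smul_eq_nsmul ℚ, smul_smul, smul_smul, Nat.cast_choose ℚ hin]
  congr 1
  field_simp

theorem succ_mul_mixedProductSum_succ (f g : ℕ → A) (n : ℕ) :
    ((n + 1 : ℕ) : A) * mixedProductSum f g (n + 1) =
      f 0 * mixedProductSum (fun j ↦ f (j + 1)) (fun j ↦ g (j + 1)) n -
        g n * mixedProductSum f g n := by
  set T := mixedProduct f g (n + 1)
  have hpascal := sum_choose_succ_nsmul (fun i j ↦ (-1 : ℚ) ^ j • T i) n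
  have hup : f 0 * mixedProductSum (fun j ↦ f (j + 1)) (fun j ↦ g (j + 1)) n =
      (n.factorial : ℚ)⁻¹ • ∑ i ∈ range (n + 1), n.choose i • (-1 : ℚ) ^ (n - i) • T (i + 1) := by
    simp only [mixedProductSum_eq_smul_sum_choose, mul_smul_comm, mul_sum, mul_mixedProduct_succ, T]
  have hdown : g n * mixedProductSum f g n =
      (n.factorial : ℚ)⁻¹ • ∑ i ∈ range (n + 1), n.choose i • (-1 : ℚ) ^ (n - i) • T i := by
    rw [mixedProductSum_eq_smul_sum_choose, mul_smul_comm, mul_sum]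
    refine congrArg _ (sum_congr rfl fun i hi ↦ ?_)
    rw [mul_smul_comm, mul_smul_comm,
      mul_mixedProduct_of_le f g (Nat.lt_succ_iff.mp (mem_range.mp hi))]
  have hsign : ∑ i ∈ range (n + 1), n.choose i • (-1 : ℚ) ^ (n + 1 - i) • T i =
      -∑ i ∈ range (n + 1), n.choose i • (-1 : ℚ) ^ (n - i) • T i := by
    rw [← sum_neg_distrib]
    refine sum_congr rfl fun i hi ↦ ?_
    rw [Nat.sub_add_comm (Nat.lt_succ_iff.mp (mem_range.mp hi)), pow_succ, mul_neg_one, neg_smul,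
      smul_neg]
  have hfactorial : ((n + 1).factorial : ℚ)⁻¹ * ((n + 1 : ℕ) : ℚ) = (n.factorial : ℚ)⁻¹ := by
    rw [Nat.factorial_succ]
    push_cast
    field_simp
  rw [mixedProductSum_eq_smul_sum_choose, mul_smul_comm, ← nsmul_eq_mul, ← Nat.cast_smul_eq_nsmul ℚ,
    smul_smul, hfactorial, hup, hdown, ← smul_sub, show n + 1 + 1 = n + 2 from rfl, hpascal, hsign,
    neg_add_eq_sub]

end MixedProductSum

/-- Let `A` be a commutative `ℚ`-algebra, `u : A → A` an
arbitrary function, and `k, m ∈ A`.  For `n ∈ ℕ` and `s ∈ A` define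
`φ_n(s) = Σ_{i=0}^n ((-1)^{n-i}/(i!·(n-i)!)) · ∏_{j=0}^{i-1} u(s + (m + (2j+1-n)·k)/2)
· ∏_{j=i}^{n-1} u(s + (-m + (2j+1-n)·k)/2)`.  Then `φ_0(s) = 1` for all `s`, and
for all `n ∈ ℕ` and `s ∈ A`:
`(n+1)·φ_{n+1}(s) = u(s + (m - n·k)/2)·φ_n(s + k/2) - u(s - (m - n·k)/2)·φ_n(s - k/2)`. -/
theorem conjugated_current_closed_form
    (A : Type*) [CommRing A] [Algebra ℚ A] (u : A → A) (k m : A)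
    (φ : ℕ → A → A)
    (hφ : ∀ (n : ℕ) (s : A), φ n s =
      ∑ i ∈ Finset.range (n + 1),
        (((-1 : ℚ) ^ (n - i) / (Nat.factorial i * Nat.factorial (n - i))) •
          ((∏ j ∈ Finset.range i,
              u (s + ((1 : ℚ) / 2) • (m + (2 * (j : ℚ) + 1 - (n : ℚ)) • k))) *
           (∏ j ∈ Finset.Ico i n,
              u (s + ((1 : ℚ) / 2) • (-m + (2 * (j : ℚ) + 1 - (n : ℚ)) • k)))))) :
    (∀ s : A, φ 0 s = 1) ∧
    (∀ (n : ℕ) (s : A),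
      ((n + 1 : ℕ) : A) * φ (n + 1) s =
        u (s + ((1 : ℚ) / 2) • (m - (n : ℚ) • k)) * φ n (s + ((1 : ℚ) / 2) • k) -
          u (s - ((1 : ℚ) / 2) • (m - (n : ℚ) • k)) * φ n (s - ((1 : ℚ) / 2) • k)) := by
  have hS : ∀ n s, φ n s = mixedProductSum
      (fun j : ℕ ↦ u (s + ((1 : ℚ) / 2) • (m + (2 * (j : ℚ) + 1 - (n : ℚ)) • k)))
      (fun j : ℕ ↦ u (s + ((1 : ℚ) / 2) • (-m + (2 * (j : ℚ) + 1 - (n : ℚ)) • k))) n := hφ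
  refine ⟨fun s ↦ by simp [hS, mixedProductSum, mixedProduct], fun n s ↦ ?_⟩
  rw [hS, hS, hS, succ_mul_mixedProductSum_succ]
  congr 2
  · congr 1; push_cast; module
  · congr 1 <;> funext j <;> congr 1 <;> push_cast <;> module
  · congr 1; push_cast; module
  · congr 1 <;> funext j <;> congr 1 <;> push_cast <;> module
end

section
/- Let k be a positive integer, w : ℝ → ℝ a differentiable function, and fix z > 0 and s ∈ ℝ with w(s) > 0. Define S(β) = s + k·z^k·β·w(s) for β ∈ ℝ, and let J ⊆ ℝ be an open interval containing 0 such that w(S(β)) > 0 for all β ∈ J; define Z(β) = z·(w(s)/w(S(β)))^{1/k} for β ∈ J (real power). Then for all β ∈ J: Z(β) > 0; S is differentiable with S'(β) = k·Z(β)^k·w(S(β)); Z is differentiable with Z'(β) = -Z(β)^{k+1}·w'(S(β)); Z(0) = z and S(0) = s; and the Hamiltonian is conserved: Z(β)^k·w(S(β)) = z^k·w(s). In other words, β ↦ (Z(β), S(β)) is the integral curve through (z,s) of the Hamiltonian vector field of 𝔴(z,s) = z^k·w(s) with respect to the symplectic form (dz/z)∧ds on ℝ_{>0}×ℝ. -/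
/-! Along the curve the Hamiltonian `Z^k · w(S)` is constant by construction, so `Z` is the
`k`-th root of `z^k w(s) / w(S)`. Its logarithmic derivative is `-(1/k)` times that of `w ∘ S`,
namely `-(1/k) w'(S) S' / w(S)`; substituting `S' = k z^k w(s) = k Z^k w(S)` gives
`Z' = -Z^{k+1} w'(S)`. -/

theorem mul_rpow_one_div_div_pow_mul {k : ℕ} (hk : k ≠ 0) {A B : ℝ} (hAB : 0 ≤ A / B)
    (hB : B ≠ 0) (z : ℝ) : (z * (A / B) ^ ((1 : ℝ) / k)) ^ k * B = z ^ k * A := by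
  rw [mul_pow, one_div, Real.rpow_inv_natCast_pow hAB hk]
  field_simp

theorem HasDerivAt.const_mul_div_rpow {f : ℝ → ℝ} {f' x : ℝ} (hf : HasDerivAt f f' x)
    (hfx : f x ≠ 0) {A : ℝ} (hA : A ≠ 0) (c p : ℝ) :
    HasDerivAt (fun y => c * (A / f y) ^ p) (-(p * (c * (A / f x) ^ p) * f' / f x)) x := by
  have hAf : A / f x ≠ 0 := div_ne_zero hA hfx
  refine ((((hasDerivAt_const x A).div hf hfx).rpow_const (p := p)
    (Or.inl hAf)).const_mul c).congr_deriv ?_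
  simp only [Pi.div_apply]
  rw [Real.rpow_sub_one hAf]
  field_simp
  ring

theorem hamiltonian_flow_integral_curve_general
    (k : ℕ) (hk : 0 < k) (w : ℝ → ℝ) (hw : Differentiable ℝ w)
    (z s : ℝ) (hz : 0 < z)
    (S : ℝ → ℝ) (hS : ∀ β : ℝ, S β = s + k * z ^ k * β * w s)
    (a b : ℝ) (h0J : (0 : ℝ) ∈ Set.Ioo a b)
    (hJpos : ∀ β ∈ Set.Ioo a b, 0 < w (S β))
    (Z : ℝ → ℝ) (hZ : ∀ β ∈ Set.Ioo a b, Z β = z * (w s / w (S β)) ^ ((1 : ℝ) / k)) :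
    Z 0 = z ∧ S 0 = s ∧
    ∀ β ∈ Set.Ioo a b,
      0 < Z β ∧
      HasDerivAt S (k * Z β ^ k * w (S β)) β ∧
      HasDerivAt Z (-(Z β ^ (k + 1)) * deriv w (S β)) β ∧
      Z β ^ k * w (S β) = z ^ k * w s := by
  have hS0 : S 0 = s := by simp [hS]
  have hws : 0 < w s := hS0 ▸ hJpos 0 h0J
  have hZ0 : Z 0 = z := by simp [hZ 0 h0J, hS0, hws.ne']
  refine ⟨hZ0, hS0, fun β hβ => ?_⟩
  have hwSβ := hJpos β hβ
  have hcons : Z β ^ k * w (S β) = z ^ k * w s := by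
    rw [hZ β hβ]
    exact mul_rpow_one_div_div_pow_mul hk.ne' (div_pos hws hwSβ).le hwSβ.ne' z
  have hS' : HasDerivAt S (k * Z β ^ k * w (S β)) β := by
    rw [mul_assoc, hcons, ← mul_assoc, funext hS]
    simpa using (((hasDerivAt_id β).const_mul (k * z ^ k : ℝ)).mul_const (w s)).const_add s
  have hZ_eq : Z =ᶠ[nhds β] fun y => z * (w s / w (S y)) ^ ((1 : ℝ) / k) :=
    Filter.eventually_of_mem (isOpen_Ioo.mem_nhds hβ) hZ
  refine ⟨hZ β hβ ▸ mul_pos hz (by positivity), hS', ?_, hcons⟩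
  refine ((((hw (S β)).hasDerivAt.comp β hS').const_mul_div_rpow hwSβ.ne' hws.ne' z
    ((1 : ℝ) / k)).congr_of_eventuallyEq hZ_eq).congr_deriv ?_
  rw [Function.comp_apply, ← hZ β hβ]
  field_simp
  ring

/-- Let `k` be a positive integer, `w : ℝ → ℝ` a
differentiable function, and fix `z > 0` and `s ∈ ℝ` with `w s > 0`.  Define
`S β = s + k·z^k·β·w s`, and let `J = (a,b)` be an open interval containing `0`
such that `w (S β) > 0` on `J`; define `Z β = z·(w s / w (S β))^{1/k}` on `J`
(real power).  Then `Z 0 = z`, `S 0 = s`, and for all `β ∈ J`: `Z β > 0`, `S`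
has derivative `k·Z(β)^k·w(S β)` at `β`, `Z` has derivative
`-Z(β)^{k+1}·w'(S β)` at `β`, and the Hamiltonian is conserved:
`Z(β)^k·w(S β) = z^k·w s`.  (I.e. `β ↦ (Z β, S β)` is the integral curve
through `(z,s)` of the Hamiltonian vector field of `𝔴(z,s) = z^k·w(s)` for the
symplectic form `(dz/z)∧ds` on `ℝ_{>0}×ℝ`.) -/
theorem hamiltonian_flow_integral_curve
    (k : ℕ) (hk : 0 < k) (w : ℝ → ℝ) (hw : Differentiable ℝ w)
    (z s : ℝ) (hz : 0 < z) (hws : 0 < w s)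
    (S : ℝ → ℝ) (hS : ∀ β : ℝ, S β = s + k * z ^ k * β * w s)
    (a b : ℝ) (h0J : (0 : ℝ) ∈ Set.Ioo a b)
    (hJpos : ∀ β ∈ Set.Ioo a b, 0 < w (S β))
    (Z : ℝ → ℝ) (hZ : ∀ β ∈ Set.Ioo a b, Z β = z * (w s / w (S β)) ^ ((1 : ℝ) / k)) :
    Z 0 = z ∧ S 0 = s ∧
    ∀ β ∈ Set.Ioo a b,
      0 < Z β ∧
      HasDerivAt S (k * Z β ^ k * w (S β)) β ∧
      HasDerivAt Z (-(Z β ^ (k + 1)) * deriv w (S β)) β ∧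
      Z β ^ k * w (S β) = z ^ k * w s :=
  hamiltonian_flow_integral_curve_general k hk w hw z s hz S hS a b h0J hJpos Z hZ
end

section
/- Let k be a positive integer, β ∈ ℝ, and w : ℝ → ℝ a differentiable function. On the open set U of pairs (z,s) with z > 0, w(s) > 0, and w(s + k·z^k·β·w(s)) > 0, define Υ(z,s) = s + k·z^k·β·w(s) and Ξ(z,s) = z·(w(s)/w(Υ(z,s)))^{1/k} (real power). Then at every point of U: ∂_z(log Ξ)·∂_s Υ - ∂_s(log Ξ)·∂_z Υ = 1/z. Equivalently, the map (z,s) ↦ (Ξ(z,s), Υ(z,s)) pulls back the 2-form (dΞ/Ξ)∧dΥ to (dz/z)∧ds, i.e. the time-β Hamiltonian flow of 𝔴(z,s) = z^k·w(s) is a symplectomorphism onto its image for the symplectic form Ω = (dz/z)∧ds. -/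
/-!
Along the flow, `log Ξ = log z + r (log w(s) - log w(Υ))` with `r = 1/k`. In the Jacobian
`∂_z(log Ξ) ∂_s Υ - ∂_s(log Ξ) ∂_z Υ` the two terms carrying `w'(Υ)` are both
`r w'(Υ)/w(Υ) · ∂_z Υ ∂_s Υ` and cancel, leaving `∂_s Υ / z - r (w'(s)/w(s)) ∂_z Υ`.
With `∂_s Υ = 1 + k β z^k w'(s)` and `∂_z Υ = k² β z^(k-1) w(s)` the two `w'(s)` terms
cancel as well, and `1/z` remains.
-/

open Real Filter Topology

lemma HasDerivAt.log_mul_rpow_div {a p q : ℝ → ℝ} {a' p' q' t : ℝ} (r : ℝ)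
    (ha : HasDerivAt a a' t) (hp : HasDerivAt p p' t) (hq : HasDerivAt q q' t)
    (ha0 : 0 < a t) (hp0 : 0 < p t) (hq0 : 0 < q t) :
    HasDerivAt (fun t => Real.log (a t * (p t / q t) ^ r))
      (a' / a t + r * (p' / p t - q' / q t)) t := by
  have hlog : (fun t => Real.log (a t) + r * (Real.log (p t) - Real.log (q t))) =ᶠ[𝓝 t]
      fun t => Real.log (a t * (p t / q t) ^ r) := by
    filter_upwards [ha.continuousAt.eventually (eventually_gt_nhds ha0),
      hp.continuousAt.eventually (eventually_gt_nhds hp0),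
      hq.continuousAt.eventually (eventually_gt_nhds hq0)] with t ha0 hp0 hq0
    rw [log_mul ha0.ne' (rpow_pos_of_pos (div_pos hp0 hq0) r).ne', log_rpow (div_pos hp0 hq0),
      log_div hp0.ne' hq0.ne']
  exact ((ha.log ha0.ne').add (((hp.log hp0.ne').sub (hq.log hq0.ne')).const_mul r))
    |>.congr_of_eventuallyEq hlog.symm

namespace HamiltonianFlow

variable (c r : ℝ) (n : ℕ) (w : ℝ → ℝ)

/-- The time-`β` flow of `z ^ k * w s` is `flowΥ (k * β) k w`, `flowΞ (k * β) (1 / k) k w`. -/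
def flowΥ (z s : ℝ) : ℝ := s + c * z ^ n * w s

noncomputable def flowΞ (z s : ℝ) : ℝ := z * (w s / w (flowΥ c n w z s)) ^ r

variable {c r n w}

lemma hasDerivAt_flowΥ_fst (s z : ℝ) :
    HasDerivAt (fun z' => flowΥ c n w z' s) (c * (n * z ^ (n - 1)) * w s) z :=
  (((hasDerivAt_pow n z).const_mul c).mul_const (w s)).const_add s

lemma hasDerivAt_flowΥ_snd {z s W : ℝ} (hw : HasDerivAt w W s) :
    HasDerivAt (fun s' => flowΥ c n w z s') (1 + c * z ^ n * W) s :=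
  (hasDerivAt_id' s).add (hw.const_mul (c * z ^ n))

lemma flowΞ_flowΥ_jacobian (hrn : r * n = 1) {z s : ℝ} (hdws : DifferentiableAt ℝ w s)
    (hdwu : DifferentiableAt ℝ w (flowΥ c n w z s))
    (hz : 0 < z) (hws : 0 < w s) (hwu : 0 < w (flowΥ c n w z s)) :
    deriv (fun z' => log (flowΞ c r n w z' s)) z * deriv (fun s' => flowΥ c n w z s') s -
        deriv (fun s' => log (flowΞ c r n w z s')) s * deriv (fun z' => flowΥ c n w z' s) z =
      1 / z := by
  set u := flowΥ c n w z s
  set W := deriv w s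
  set W' := deriv w u
  set Υz := c * (n * z ^ (n - 1)) * w s
  set Υs := 1 + c * z ^ n * W
  have hΥz : HasDerivAt (fun z' => flowΥ c n w z' s) Υz z := hasDerivAt_flowΥ_fst s z
  have hΥs : HasDerivAt (fun s' => flowΥ c n w z s') Υs s :=
    hasDerivAt_flowΥ_snd hdws.hasDerivAt
  have hLz : HasDerivAt (fun z' => log (flowΞ c r n w z' s))
      (1 / z + r * (0 / w s - W' * Υz / w u)) z :=
    (hasDerivAt_id' z).log_mul_rpow_div r (hasDerivAt_const z (w s))
      (hdwu.hasDerivAt.comp z hΥz) hz hws hwu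
  have hLs : HasDerivAt (fun s' => log (flowΞ c r n w z s'))
      (0 / z + r * (W / w s - W' * Υs / w u)) s :=
    (hasDerivAt_const s z).log_mul_rpow_div r hdws.hasDerivAt
      (hdwu.hasDerivAt.comp s hΥs) hz hws hwu
  have hn : n ≠ 0 := by rintro rfl; simp at hrn
  rw [hLz.deriv, hLs.deriv, hΥz.deriv, hΥs.deriv]
  calc _ = Υs / z - r * (W / w s) * Υz := by ring
    _ = 1 / z + c * z ^ (n - 1) * W * (1 - r * n) := by
      simp only [Υs, Υz]
      rw [← mul_pow_sub_one hn z]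
      field_simp
      ring
    _ = 1 / z := by rw [hrn]; ring

end HamiltonianFlow

open HamiltonianFlow in
/-- Let `k` be a positive integer, `β ∈ ℝ`, and `w : ℝ → ℝ`
a differentiable function.  On the open set `U` of pairs `(z,s)` with `z > 0`,
`w s > 0` and `w (s + k·z^k·β·w s) > 0`, define `Υ(z,s) = s + k·z^k·β·w s` and
`Ξ(z,s) = z·(w s / w (Υ(z,s)))^{1/k}` (real power).  Then at every point of
`U`: `∂_z(log Ξ)·∂_s Υ - ∂_s(log Ξ)·∂_z Υ = 1/z`, i.e. the time-`β`
Hamiltonian flow of `𝔴(z,s) = z^k·w(s)` pulls back `(dΞ/Ξ)∧dΥ` to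
`(dz/z)∧ds`: it is a symplectomorphism onto its image for the symplectic form
`Ω = (dz/z)∧ds`. -/
theorem hamiltonian_flow_is_symplectomorphism
    (k : ℕ) (hk : 0 < k) (β : ℝ) (w : ℝ → ℝ) (hw : Differentiable ℝ w)
    (Υ Ξ : ℝ → ℝ → ℝ)
    (hΥ : ∀ z s : ℝ, Υ z s = s + k * z ^ k * β * w s)
    (hΞ : ∀ z s : ℝ, Ξ z s = z * (w s / w (Υ z s)) ^ ((1 : ℝ) / k)) :
    ∀ z s : ℝ, 0 < z → 0 < w s → 0 < w (Υ z s) →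
      deriv (fun z' => Real.log (Ξ z' s)) z * deriv (fun s' => Υ z s') s -
          deriv (fun s' => Real.log (Ξ z s')) s * deriv (fun z' => Υ z' s) z =
        1 / z := by
  obtain rfl : Υ = flowΥ (k * β) k w := by
    ext z s
    rw [hΥ, flowΥ]
    ring
  obtain rfl : Ξ = flowΞ (k * β) (1 / k) k w := funext₂ hΞ
  intro z s hz hws hwu
  exact flowΞ_flowΥ_jacobian (one_div_mul_cancel (Nat.cast_ne_zero.mpr hk.ne')) (hw s) (hw _)
    hz hws hwu
end
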